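/- arXiv:1701.05023 — 3 statements merged into one kernel-verified Lean document; each statement's English description precedes it below -/
import Mathlib

section
/- Let ν, α, β be real numbers with α + β = −2ν (so the quadruple (ν, ν, α, β) has zero sum). Define the power sums b = 2ν² + α² + β² and d = 2ν⁴ + α⁴ + β⁴. Then 7b² − 12d = 4(3ν² + αβ)². In particular, 7b² = 12d if and only if αβ = −3ν², which (given α + β = −2ν) holds if and only if {α, β} = {ν, −3ν}, i.e. the quadruple has a triple value. -/
/-- identity `7b² − 12d = 4(3ν² + αβ)²` for a zero-sum quadruple `(ν,ν,α,β)`,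
and the characterization of `7b² = 12d` as the triple-value case. -/
theorem stmt_1 (ν α β : ℝ) (hsum : α + β = -2 * ν)
    (b d : ℝ)
    (hb : b = 2 * ν ^ 2 + α ^ 2 + β ^ 2)
    (hd : d = 2 * ν ^ 4 + α ^ 4 + β ^ 4) :
    7 * b ^ 2 - 12 * d = 4 * (3 * ν ^ 2 + α * β) ^ 2 ∧
    (7 * b ^ 2 = 12 * d ↔ α * β = -3 * ν ^ 2) ∧
    (α * β = -3 * ν ^ 2 ↔ ((α = ν ∧ β = -3 * ν) ∨ (α = -3 * ν ∧ β = ν))) := by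
  have hβ : β = -2 * ν - α := by linarith
  subst hβ hb hd
  have hid : 7 * (2 * ν ^ 2 + α ^ 2 + (-2 * ν - α) ^ 2) ^ 2 -
      12 * (2 * ν ^ 4 + α ^ 4 + (-2 * ν - α) ^ 4) =
      4 * (3 * ν ^ 2 + α * (-2 * ν - α)) ^ 2 := by ring
  refine ⟨hid, ⟨fun h => ?_, fun h => by nlinarith [sq_nonneg (3 * ν ^ 2 + α * (-2 * ν - α))]⟩,
    ⟨fun h => ?_, fun h => by rcases h with ⟨h1, h2⟩ | ⟨h1, h2⟩ <;> subst h1 <;> ring⟩⟩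
  · have : (3 * ν ^ 2 + α * (-2 * ν - α)) ^ 2 = 0 := by nlinarith
    have := pow_eq_zero_iff (n := 2) (by norm_num) |>.mp this
    linarith
  · have hfac : (α - ν) * (α + 3 * ν) = 0 := by nlinarith
    rcases mul_eq_zero.mp hfac with h1 | h1
    · left; constructor <;> linarith
    · right; constructor <;> linarith
end

section
/- Let (V, g) be a 4-dimensional real vector space with a nondegenerate symmetric bilinear form of Lorentzian signature (−,+,+,+), and let N be a nonzero g-self-adjoint endomorphism of V with N² = 0 (as an endomorphism). Then there exist a null vector ℓ ∈ V (g(ℓ,ℓ) = 0, ℓ ≠ 0) and ε ∈ {1, −1} such that N(x) = ε·g(ℓ,x)·ℓ for all x ∈ V. In particular tr N = 0. -/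
/-- Two g-orthogonal null vectors in Lorentz signature are proportional (coordinate form). -/
lemma cs_key (u0 u1 u2 u3 w0 w1 w2 w3 : ℝ)
    (hu : -(u0*u0) + u1*u1 + u2*u2 + u3*u3 = 0)
    (hw : -(w0*w0) + w1*w1 + w2*w2 + w3*w3 = 0)
    (huw : -(u0*w0) + u1*w1 + u2*w2 + u3*w3 = 0)
    (hne : ¬(u0 = 0 ∧ u1 = 0 ∧ u2 = 0 ∧ u3 = 0)) :
    ∃ t : ℝ, w0 = t*u0 ∧ w1 = t*u1 ∧ w2 = t*u2 ∧ w3 = t*u3 := by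
  have hS : (u1*w2 - u2*w1)^2 + (u1*w3 - u3*w1)^2 + (u2*w3 - u3*w2)^2 = 0 := by
    linear_combination (w1*w1+w2*w2+w3*w3) * hu + u0*u0 * hw
      - (u0*w0 + u1*w1 + u2*w2 + u3*w3) * huw
  have m12 : u1*w2 - u2*w1 = 0 := by nlinarith [sq_nonneg (u1*w2-u2*w1), sq_nonneg (u1*w3-u3*w1), sq_nonneg (u2*w3-u3*w2)]
  have m13 : u1*w3 - u3*w1 = 0 := by nlinarith [sq_nonneg (u1*w2-u2*w1), sq_nonneg (u1*w3-u3*w1), sq_nonneg (u2*w3-u3*w2)]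
  have m23 : u2*w3 - u3*w2 = 0 := by nlinarith [sq_nonneg (u1*w2-u2*w1), sq_nonneg (u1*w3-u3*w1), sq_nonneg (u2*w3-u3*w2)]
  have e01 : (u0*w1 - u1*w0)^2 = 0 := by
    linear_combination (-(w1^2)) * hu - u1^2 * hw + 2*u1*w1*huw
      + (u1*w2-u2*w1) * m12 + (u1*w3-u3*w1) * m13
  have e02 : (u0*w2 - u2*w0)^2 = 0 := by
    linear_combination (-(w2^2)) * hu - u2^2 * hw + 2*u2*w2*huw
      + (u1*w2-u2*w1) * m12 + (u2*w3-u3*w2) * m23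
  have e03 : (u0*w3 - u3*w0)^2 = 0 := by
    linear_combination (-(w3^2)) * hu - u3^2 * hw + 2*u3*w3*huw
      + (u1*w3-u3*w1) * m13 + (u2*w3-u3*w2) * m23
  have m01 : u0*w1 - u1*w0 = 0 := by
    have := pow_eq_zero_iff (n := 2) (by norm_num) |>.mp e01; linarith
  have m02 : u0*w2 - u2*w0 = 0 := by
    have := pow_eq_zero_iff (n := 2) (by norm_num) |>.mp e02; linarith
  have m03 : u0*w3 - u3*w0 = 0 := by
    have := pow_eq_zero_iff (n := 2) (by norm_num) |>.mp e03; linarith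
  have h4 : u0 ≠ 0 ∨ u1 ≠ 0 ∨ u2 ≠ 0 ∨ u3 ≠ 0 := by tauto
  rcases h4 with h | h | h | h
  · exact ⟨w0/u0, by field_simp, by field_simp; linear_combination m01,
      by field_simp; linear_combination m02, by field_simp; linear_combination m03⟩
  · exact ⟨w1/u1, by field_simp; linear_combination -m01, by field_simp,
      by field_simp; linear_combination m12, by field_simp; linear_combination m13⟩
  · exact ⟨w2/u2, by field_simp; linear_combination -m02, by field_simp; linear_combination -m12,
      by field_simp, by field_simp; linear_combination m23⟩
  · exact ⟨w3/u3, by field_simp; linear_combination -m03, by field_simp; linear_combination -m13,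
      by field_simp; linear_combination -m23, by field_simp⟩

/-- A symmetric bilinear form on a real vector space is Lorentzian of signature
`(−,+,+,+)` if it admits an orthonormal-type basis indexed by `Fin 4`. -/
def IsLorentz4 {V : Type*} [AddCommGroup V] [Module ℝ V]
    (g : V →ₗ[ℝ] V →ₗ[ℝ] ℝ) : Prop :=
  (∀ x y, g x y = g y x) ∧
  ∃ b : Module.Basis (Fin 4) ℝ V,
    ∀ i j, g (b i) (b j) = if i = j then (if i = 0 then -1 else 1) else 0

/-- a nonzero `g`-self-adjoint endomorphism `N` with `N² = 0` on a
Lorentzian 4-space is of the form `N = ε ℓ⊗ℓ♭` with `ℓ` null; in particular `tr N = 0`. -/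
theorem stmt_8 {V : Type*} [AddCommGroup V] [Module ℝ V] [FiniteDimensional ℝ V]
    (g : V →ₗ[ℝ] V →ₗ[ℝ] ℝ) (hg : IsLorentz4 g)
    (N : V →ₗ[ℝ] V) (hsa : ∀ x y, g (N x) y = g x (N y))
    (hN2 : N ∘ₗ N = 0) (hN0 : N ≠ 0) :
    (∃ (ℓ : V) (ε : ℝ), ℓ ≠ 0 ∧ g ℓ ℓ = 0 ∧ (ε = 1 ∨ ε = -1) ∧
      ∀ x, N x = (ε * g ℓ x) • ℓ) ∧
    LinearMap.trace ℝ V N = 0 := by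
  obtain ⟨hsymm, b, hb⟩ := hg
  -- coordinate formula for g
  have hform : ∀ x y : V, g x y = -(b.repr x 0 * b.repr y 0) + b.repr x 1 * b.repr y 1
      + b.repr x 2 * b.repr y 2 + b.repr x 3 * b.repr y 3 := by
    intro x y
    have hx : x = ∑ i, b.repr x i • b i := (b.sum_repr x).symm
    have hy : y = ∑ j, b.repr y j • b j := (b.sum_repr y).symm
    conv_lhs => rw [hx, hy]
    simp only [map_sum, map_smul, LinearMap.sum_apply, LinearMap.smul_apply, smul_eq_mul]
    rw [Fin.sum_univ_four]
    simp only [Fin.sum_univ_four, hb, reduceIte, Fin.reduceEq]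
    ring
  have hgb : ∀ (x : V) (i : Fin 4),
      g x (b i) = (if i = 0 then (-1:ℝ) else 1) * b.repr x i := by
    intro x i
    rw [hform x (b i)]
    fin_cases i <;>
      simp (config := { decide := true }) [Module.Basis.repr_self, Finsupp.single_apply]
  -- N ∘ N = 0 pointwise
  have hNN : ∀ z : V, N (N z) = 0 := by
    intro z
    have := LinearMap.ext_iff.mp hN2 z
    simpa using this
  -- pick v with N v ≠ 0
  obtain ⟨v, hv⟩ : ∃ v, N v ≠ 0 := by
    by_contra h
    push_neg at h
    exact hN0 (LinearMap.ext fun x => by simpa using h x)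
  set L : V := N v with hL
  have hLne : L ≠ 0 := hv
  have hnullL : g L L = 0 := by
    rw [hL, hsa, hNN, map_zero]
  -- any N x is proportional to L
  have hnullNx : ∀ x, g (N x) (N x) = 0 := fun x => by rw [hsa, hNN, map_zero]
  have horth : ∀ x, g L (N x) = 0 := fun x => by rw [hL, hsa, hNN, map_zero]
  have hucoords : ¬(b.repr L 0 = 0 ∧ b.repr L 1 = 0 ∧ b.repr L 2 = 0 ∧ b.repr L 3 = 0) := by
    rintro ⟨h0, h1, h2, h3⟩
    apply hLne
    have : ∀ i : Fin 4, b.repr L i = 0 := by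
      intro i; fin_cases i <;> assumption
    apply b.ext_elem
    intro i; simp [this i]
  have hprop : ∀ x, ∃ t : ℝ, N x = t • L := by
    intro x
    have hu : -(b.repr L 0 * b.repr L 0) + b.repr L 1 * b.repr L 1
        + b.repr L 2 * b.repr L 2 + b.repr L 3 * b.repr L 3 = 0 := by
      rw [← hform]; exact hnullL
    have hw : -(b.repr (N x) 0 * b.repr (N x) 0) + b.repr (N x) 1 * b.repr (N x) 1
        + b.repr (N x) 2 * b.repr (N x) 2 + b.repr (N x) 3 * b.repr (N x) 3 = 0 := by
      rw [← hform]; exact hnullNx x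
    have huw : -(b.repr L 0 * b.repr (N x) 0) + b.repr L 1 * b.repr (N x) 1
        + b.repr L 2 * b.repr (N x) 2 + b.repr L 3 * b.repr (N x) 3 = 0 := by
      rw [← hform]; exact horth x
    obtain ⟨t, h0, h1, h2, h3⟩ := cs_key _ _ _ _ _ _ _ _ hu hw huw hucoords
    refine ⟨t, b.ext_elem fun i => ?_⟩
    have : b.repr (t • L) i = t * b.repr L i := by simp
    rw [this]
    fin_cases i <;> assumption
  -- find y0 with g L y0 ≠ 0
  obtain ⟨i0, hi0⟩ : ∃ i : Fin 4, b.repr L i ≠ 0 := by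
    by_contra h
    push_neg at h
    exact hucoords ⟨h 0, h 1, h 2, h 3⟩
  set y0 : V := b i0 with hy0
  have hgLy0 : g L y0 ≠ 0 := by
    rw [hy0, hgb]
    rcases eq_or_ne i0 0 with h | h
    · subst h; simpa using hi0
    · simp [h, hi0]
  obtain ⟨t0, ht0⟩ := hprop y0
  set c : ℝ := t0 / g L y0 with hc
  have hfinal : ∀ x, N x = (c * g L x) • L := by
    intro x
    obtain ⟨t, ht⟩ := hprop x
    have hrel : t * g L y0 = t0 * g L x := by
      have h1 : g (N x) y0 = g x (N y0) := hsa x y0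
      rw [ht, ht0] at h1
      simp only [map_smul, LinearMap.smul_apply, smul_eq_mul] at h1
      rw [hsymm x L] at h1
      linarith
    have : t = c * g L x := by
      rw [hc]; field_simp; linarith
    rw [ht, this]
  have hcne : c ≠ 0 := by
    intro h
    apply hv
    rw [hL, hfinal v, h]
    simp
  -- build ℓ and ε
  set s : ℝ := Real.sqrt |c| with hs
  have hspos : 0 < s := Real.sqrt_pos.mpr (abs_pos.mpr hcne)
  have hs2 : s * s = |c| := Real.mul_self_sqrt (abs_nonneg c)
  set ε : ℝ := if 0 ≤ c then 1 else -1 with hε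
  have hεc : ε * (s * s) = c := by
    rw [hs2, hε]
    rcases le_or_gt 0 c with h | h
    · simp [h, abs_of_nonneg h]
    · rw [if_neg (not_le.mpr h), abs_of_neg h]; ring
  set ℓ : V := s • L with hℓ
  have hℓne : ℓ ≠ 0 := smul_ne_zero (ne_of_gt hspos) hLne
  have hℓnull : g ℓ ℓ = 0 := by
    rw [hℓ]; simp [map_smul, hnullL]
  have hrep : ∀ x, N x = (ε * g ℓ x) • ℓ := by
    intro x
    rw [hℓ]
    simp only [map_smul, LinearMap.smul_apply, smul_eq_mul, smul_smul]
    rw [hfinal x]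
    congr 1
    rw [← hεc]; ring
  refine ⟨⟨ℓ, ε, hℓne, hℓnull, by rw [hε]; split <;> simp, hrep⟩, ?_⟩
  -- trace
  have htr : LinearMap.trace ℝ V N = ∑ i, b.repr (N (b i)) i := by
    rw [LinearMap.trace_eq_matrix_trace ℝ b, Matrix.trace]
    simp [LinearMap.toMatrix_apply, Matrix.diag]
  rw [htr]
  have hrepr : ∀ i : Fin 4, b.repr (N (b i)) i = c * g L (b i) * b.repr L i := by
    intro i
    rw [hfinal (b i)]
    simp
  have hnull' : -(b.repr L 0 * b.repr L 0) + b.repr L 1 * b.repr L 1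
      + b.repr L 2 * b.repr L 2 + b.repr L 3 * b.repr L 3 = 0 := by
    rw [← hform]; exact hnullL
  rw [Fin.sum_univ_four, hrepr 0, hrepr 1, hrepr 2, hrepr 3,
    hgb L 0, hgb L 1, hgb L 2, hgb L 3, if_pos rfl,
    if_neg (by decide : ¬((1:Fin 4) = 0)), if_neg (by decide : ¬((2:Fin 4) = 0)),
    if_neg (by decide : ¬((3:Fin 4) = 0))]
  linear_combination c * hnull'
end

section
/- Let ν₁, ν₂, ν₃, ν₄ be real numbers with ν₁ + ν₂ + ν₃ + ν₄ = 0, and define the power sums b = Σνᵢ², c = Σνᵢ³, d = Σνᵢ⁴. If b² ≠ 4d and the quadruple has a repeated value ν occurring at least twice, with the remaining two values α, β satisfying α ≠ ν and β ≠ ν, then ν = c·(7b² − 12d) / (3·[b·(b² − 4d) + 4c²]), and in particular the denominator b(b² − 4d) + 4c² is nonzero. -/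
/-- explicit formula for the double eigenvalue `ν` of a zero-sum quadruple
in terms of the power sums `b, c, d`, in the generic case `b² ≠ 4d`. -/
theorem stmt_15 (ν₁ ν₂ ν₃ ν₄ ν α β : ℝ) (hsum : ν₁ + ν₂ + ν₃ + ν₄ = 0)
    (b c d : ℝ)
    (hb : b = ν₁ ^ 2 + ν₂ ^ 2 + ν₃ ^ 2 + ν₄ ^ 2)
    (hc : c = ν₁ ^ 3 + ν₂ ^ 3 + ν₃ ^ 3 + ν₄ ^ 3)
    (hd : d = ν₁ ^ 4 + ν₂ ^ 4 + ν₃ ^ 4 + ν₄ ^ 4)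
    (hgen : b ^ 2 ≠ 4 * d)
    (hmult : ({ν₁, ν₂, ν₃, ν₄} : Multiset ℝ) = {ν, ν, α, β})
    (hα : α ≠ ν) (hβ : β ≠ ν) :
    b * (b ^ 2 - 4 * d) + 4 * c ^ 2 ≠ 0 ∧
    ν = c * (7 * b ^ 2 - 12 * d) / (3 * (b * (b ^ 2 - 4 * d) + 4 * c ^ 2)) := by
  have h1 : ν₁ + ν₂ + ν₃ + ν₄ = ν + ν + α + β := by
    have := congrArg Multiset.sum hmult
    simpa [add_assoc] using this
  have h2 : ν₁ ^ 2 + ν₂ ^ 2 + ν₃ ^ 2 + ν₄ ^ 2 = ν ^ 2 + ν ^ 2 + α ^ 2 + β ^ 2 := by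
    have := congrArg (fun s : Multiset ℝ => (s.map (· ^ 2)).sum) hmult
    simpa [add_assoc] using this
  have h3 : ν₁ ^ 3 + ν₂ ^ 3 + ν₃ ^ 3 + ν₄ ^ 3 = ν ^ 3 + ν ^ 3 + α ^ 3 + β ^ 3 := by
    have := congrArg (fun s : Multiset ℝ => (s.map (· ^ 3)).sum) hmult
    simpa [add_assoc] using this
  have h4 : ν₁ ^ 4 + ν₂ ^ 4 + ν₃ ^ 4 + ν₄ ^ 4 = ν ^ 4 + ν ^ 4 + α ^ 4 + β ^ 4 := by
    have := congrArg (fun s : Multiset ℝ => (s.map (· ^ 4)).sum) hmult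
    simpa [add_assoc] using this
  have hβeq : β = -2 * ν - α := by linarith [h1.symm.trans hsum]
  subst hb hc hd hβeq
  simp only [h2, h3, h4] at hgen ⊢
  have han : α + ν ≠ 0 := by
    intro h
    have hα' : α = -ν := by linarith
    apply hgen
    rw [hα']; ring
  have haν : α - ν ≠ 0 := sub_ne_zero.mpr hα
  have hbν : (-2 * ν - α) - ν ≠ 0 := sub_ne_zero.mpr hβ
  have hDfac : (ν ^ 2 + ν ^ 2 + α ^ 2 + (-2 * ν - α) ^ 2) *
      ((ν ^ 2 + ν ^ 2 + α ^ 2 + (-2 * ν - α) ^ 2) ^ 2 -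
        4 * (ν ^ 4 + ν ^ 4 + α ^ 4 + (-2 * ν - α) ^ 4)) +
      4 * (ν ^ 3 + ν ^ 3 + α ^ 3 + (-2 * ν - α) ^ 3) ^ 2 =
      -8 * ((α - ν) * ((-2 * ν - α) - ν) * (α + ν)) ^ 2 := by ring
  have hD : (ν ^ 2 + ν ^ 2 + α ^ 2 + (-2 * ν - α) ^ 2) *
      ((ν ^ 2 + ν ^ 2 + α ^ 2 + (-2 * ν - α) ^ 2) ^ 2 -
        4 * (ν ^ 4 + ν ^ 4 + α ^ 4 + (-2 * ν - α) ^ 4)) +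
      4 * (ν ^ 3 + ν ^ 3 + α ^ 3 + (-2 * ν - α) ^ 3) ^ 2 ≠ 0 := by
    rw [hDfac]
    have : (α - ν) * ((-2 * ν - α) - ν) * (α + ν) ≠ 0 :=
      mul_ne_zero (mul_ne_zero haν hbν) han
    positivity
  refine ⟨hD, ?_⟩
  rw [eq_div_iff (by positivity)]
  ring
end
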